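/- arXiv:1412.7574 — 4 statements merged into one kernel-verified Lean document; each statement's English description precedes it below -/
import Mathlib

section
/- The difference L_even(n) − L_odd(n) between the number of even and odd Latin squares of order n equals (-1)^(n(n-1)/2) times the coefficient of the monomial ∏_{i,j=1}^n X_{ij} in the polynomial det(X)^n, where X = (X_{ij}) is an n×n matrix of indeterminates. -/
/-!
Expanding `det X = ∑_τ sign τ ∏ᵢ X_{τ i, i}`, the power `det(X)^n` becomes a sum over
`n`-tuples of permutations of signed monomials, the tuple `(σ₁, …, σₙ)` contributing
`∏ₘ sign σₘ` times the product of the monomials of its permutation matrices. That product is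
`∏_{i,j} X_{ij}` exactly when every cell is covered once, i.e. when the tuple is a Latin square,
so the coefficient is the signed count of Latin squares.
-/

open Finset

/-- A Latin square of order `n`, viewed as a tuple `(σ₁, …, σₙ)` of permutations whose
permutation matrices sum to the all-ones matrix: for every cell `(i,j)` there is exactly
one `m` with `σₘ i = j`. -/
def IsLatin {n : ℕ} (σ : Fin n → Equiv.Perm (Fin n)) : Prop :=
  ∀ i j : Fin n, (Finset.univ.filter fun m => σ m i = j).card = 1

instance {n : ℕ} : DecidablePred (IsLatin (n := n)) := fun σ => by
  unfold IsLatin; infer_instance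

/-- The finite set of Latin squares of order `n`. -/
def latinSquares (n : ℕ) : Finset (Fin n → Equiv.Perm (Fin n)) :=
  Finset.univ.filter IsLatin

/-- The sign of a Latin square: `(-1)^(n(n-1)/2) ∏ᵢ sign σᵢ`. -/
def signLS {n : ℕ} (σ : Fin n → Equiv.Perm (Fin n)) : ℤˣ :=
  (-1) ^ (n * (n - 1) / 2) * ∏ i, Equiv.Perm.sign (σ i)

/-- The number of even Latin squares of order `n`. -/
def Leven (n : ℕ) : ℕ := ((latinSquares n).filter fun σ => signLS σ = 1).card

/-- The number of odd Latin squares of order `n`. -/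
def Lodd (n : ℕ) : ℕ := ((latinSquares n).filter fun σ => signLS σ = -1).card

open MvPolynomial

/-- The determinant of the `n × n` matrix of indeterminates `X = (X_{ij})`, as a
multivariate polynomial with integer coefficients. -/
noncomputable def detX (n : ℕ) : MvPolynomial (Fin n × Fin n) ℤ :=
  Matrix.det (Matrix.of fun i j => (X (i, j) : MvPolynomial (Fin n × Fin n) ℤ))

/-- The all-ones multiindex, i.e. the exponent vector of the monomial `∏_{i,j} X_{ij}`. -/
noncomputable def allOnes (n : ℕ) : (Fin n × Fin n) →₀ ℕ :=
  Finsupp.equivFunOnFinite.symm fun _ => 1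

/-- `α! := ∏ (α_{ij})!` for a multiindex `α`. -/
def mfact {σ : Type*} (α : σ →₀ ℕ) : ℕ := α.prod fun _ m => m.factorial

namespace Equiv.Perm

variable {ι : Type*} [Fintype ι] [DecidableEq ι]

/-- The exponent vector of `∏ᵢ X_{τ i, i}`. -/
noncomputable def exponent (τ : Perm ι) : (ι × ι) →₀ ℕ :=
  ∑ i, Finsupp.single (τ i, i) 1

theorem exponent_apply (τ : Perm ι) (j i : ι) :
    τ.exponent (j, i) = if τ i = j then 1 else 0 := by
  simp only [exponent, Finsupp.finsetSum_apply, Finsupp.single_apply, Prod.mk.injEq]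
  simp [and_comm, ite_and]

end Equiv.Perm

theorem det_of_X_eq_sum_monomial_exponent {R ι : Type*} [CommRing R] [Fintype ι]
    [DecidableEq ι] :
    (Matrix.of fun i j => (X (i, j) : MvPolynomial (ι × ι) R)).det =
      ∑ τ : Equiv.Perm ι, monomial τ.exponent (Equiv.Perm.sign τ : R) := by
  rw [Matrix.det_apply']
  refine sum_congr rfl fun τ _ => ?_
  have hprod : ∏ i, (X (τ i, i) : MvPolynomial (ι × ι) R) = monomial τ.exponent 1 := by
    simp only [X, Equiv.Perm.exponent, ← monomial_sum_one]
  simp only [Matrix.of_apply, hprod]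
  rw [← map_intCast (C : R →+* MvPolynomial (ι × ι) R), C_mul_monomial, mul_one]

theorem sum_exponent_eq_allOnes_iff {n : ℕ} (σ : Fin n → Equiv.Perm (Fin n)) :
    ∑ m, (σ m).exponent = allOnes n ↔ IsLatin σ := by
  have happly : ∀ i j, (∑ m, (σ m).exponent) (j, i) = #{m | σ m i = j} := fun i j => by
    rw [card_filter]
    simp [Finsupp.finsetSum_apply, Equiv.Perm.exponent_apply]
  refine ⟨fun h i j => by rw [← happly, h]; rfl, fun h => Finsupp.ext fun ⟨j, i⟩ => ?_⟩
  rw [happly, h i j]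
  rfl

theorem coeff_allOnes_detX_pow (n : ℕ) :
    coeff (allOnes n) (detX n ^ n) =
      ∑ σ ∈ latinSquares n, ∏ m, (Equiv.Perm.sign (σ m) : ℤ) := by
  have hpow : detX n ^ n = ∑ σ : Fin n → Equiv.Perm (Fin n),
      monomial (∑ m, (σ m).exponent) (∏ m, (Equiv.Perm.sign (σ m) : ℤ)) := by
    rw [← Fin.prod_const, detX, det_of_X_eq_sum_monomial_exponent, prod_univ_sum,
      Fintype.piFinset_univ]
    simp only [monomial_sum_prod, Int.cast_id]
  simp only [hpow, coeff_sum, coeff_monomial, sum_exponent_eq_allOnes_iff, latinSquares,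
    sum_filter]

theorem Int.sum_units_eq_card_sub_card {α : Type*} (s : Finset α) (f : α → ℤˣ) :
    ∑ x ∈ s, (f x : ℤ) = #{x ∈ s | f x = 1} - #{x ∈ s | f x = -1} := by
  rw [card_filter, card_filter, Nat.cast_sum, Nat.cast_sum, ← sum_sub_distrib]
  refine sum_congr rfl fun x _ => ?_
  rcases Int.units_eq_one_or (f x) with h | h <;> simp [h]

/-- `L_even(n) − L_odd(n) = (-1)^(n(n-1)/2) ·` (the coefficient of `∏_{i,j} X_{ij}`
in `det(X)^n`). -/
theorem diff_eq_coeff (n : ℕ) :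
    (Leven n : ℤ) - (Lodd n : ℤ) =
      (-1) ^ (n * (n - 1) / 2) * MvPolynomial.coeff (allOnes n) ((detX n) ^ n) := by
  calc (Leven n : ℤ) - Lodd n = ∑ σ ∈ latinSquares n, (signLS σ : ℤ) :=
        (Int.sum_units_eq_card_sub_card _ _).symm
    _ = (-1) ^ (n * (n - 1) / 2) * ∑ σ ∈ latinSquares n, ∏ m, (Equiv.Perm.sign (σ m) : ℤ) := by
        simp [signLS, mul_sum]
    _ = _ := by rw [coeff_allOnes_detX_pow]
end

section
/- The coefficient of ∏_{i,j=1}^n X_{ij} in det(X)^n equals ∑_{(σ₁,...,σₙ)} ∏ᵢ sign(σᵢ), where the sum ranges over tuples of permutations of {1,...,n} whose permutation matrices sum to the all-ones matrix (i.e., Latin squares of order n). -/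
open Finset

open MvPolynomial

/-!
Expanding `det X = ∑_τ sign τ ∏ᵢ X_{τ(i),i}` and multiplying out the `n`-th power, every
`n`-tuple of permutations contributes a single monomial, whose exponent at `(a, b)` counts the
indices `m` with `σₘ b = a`. That monomial is `∏_{i,j} X_{ij}` exactly when every such count
is `1`, i.e. when the tuple is a Latin square.
-/

theorem MvPolynomial.coeff_sum_monomial_pow {R σ ι : Type*} [CommSemiring R] [DecidableEq σ]
    [Fintype ι] (e : ι → σ →₀ ℕ) (c : ι → R) (n : ℕ) (d : σ →₀ ℕ) :
    coeff d ((∑ i, monomial (e i) (c i)) ^ n) =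
      ∑ p : Fin n → ι with ∑ m, e (p m) = d, ∏ m, c (p m) := by
  simp only [Fintype.sum_pow, ← monomial_sum_prod, coeff_sum, coeff_monomial, Finset.sum_filter]

namespace Equiv.Perm

variable {α : Type*} [Fintype α] [DecidableEq α]

noncomputable def permExponent (τ : Perm α) : α × α →₀ ℕ :=
  ∑ a, Finsupp.single (τ a, a) 1

theorem permExponent_apply (τ : Perm α) (a b : α) :
    permExponent τ (a, b) = if τ b = a then 1 else 0 := by
  rw [permExponent, Finsupp.finsetSum_apply, Finset.sum_eq_single b]
  · simp [Finsupp.single_apply]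
  · intro x _ hx
    simp [hx]
  · simp

theorem sum_permExponent_apply {ι : Type*} [Fintype ι] (p : ι → Perm α) (a b : α) :
    (∑ m, permExponent (p m)) (a, b) = #{m | p m b = a} := by
  simp only [Finsupp.finsetSum_apply, permExponent_apply, Finset.card_filter]

end Equiv.Perm

open Equiv.Perm

theorem detX_eq_sum_monomial (n : ℕ) :
    detX n = ∑ τ : Equiv.Perm (Fin n), monomial (permExponent τ) (sign τ : ℤ) := by
  rw [detX, Matrix.det_apply']
  refine Finset.sum_congr rfl fun τ _ => ?_
  rw [permExponent, monomial_sum_index, ← eq_intCast C]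
  rfl

theorem sum_permExponent_eq_allOnes_iff {n : ℕ} (p : Fin n → Equiv.Perm (Fin n)) :
    ∑ m, permExponent (p m) = allOnes n ↔ IsLatin p := by
  rw [IsLatin, Finsupp.ext_iff, Prod.forall, forall_comm]
  simp only [sum_permExponent_apply]
  rfl

/-- The coefficient of `∏_{i,j} X_{ij}` in `det(X)^n` equals the sum of `∏ᵢ sign σᵢ` over
all Latin squares `(σ₁, …, σₙ)` of order `n`. -/
theorem coeff_allOnes_det_pow (n : ℕ) :
    MvPolynomial.coeff (allOnes n) ((detX n) ^ n) =
      ∑ σ ∈ latinSquares n, ∏ i, ((Equiv.Perm.sign (σ i) : ℤˣ) : ℤ) := by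
  rw [detX_eq_sum_monomial, coeff_sum_monomial_pow, latinSquares]
  simp only [sum_permExponent_eq_allOnes_iff]
end

section
/- For every ε > 0 there exists N such that for all n ≥ N: |∑_{a=1}^n ∑_{b=a}^{a+n-1} log b − (n² log n − n²(3/2 − log 4))| ≤ ε n². Equivalently, log(n!(n+1)!⋯(2n-1)!/(0!1!⋯(n-1)!)) = n² log n − n²(3/2 − log 4) + o(n²). -/
/-! Each row `∑_{b=a}^{a+n-1} log b` is compared with `∫_a^{a+n} log = g(a+n) - g(a)`,
`g(x) = x log x - x`; since `log` is monotone the error is at most the increase of `log` along the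
row, `O(log n)`. The resulting sum `∑_a (g(a+n) - g(a))` is compared in the same way with `∫ g`,
whose antiderivative `G(x) = x²/2 · log x - 3x²/4` satisfies
`G(2n) - 2G(n) = n² log n - n²(3/2 - log 4)`. Every error is `O(n log n) = o(n²)`. -/

open Finset Real
open Filter Asymptotics

theorem abs_sum_range_sub_le_of_hasDerivAt_of_monotoneOn {f f' : ℝ → ℝ} {a : ℝ} {n : ℕ}
    (hf : ∀ x ∈ Set.Icc a (a + n), HasDerivAt f (f' x) x)
    (hf' : MonotoneOn f' (Set.Icc a (a + n))) :
    |∑ i ∈ range n, f' (a + i) - (f (a + n) - f a)| ≤ f' (a + n) - f' a := by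
  have hle : a ≤ a + n := le_add_of_nonneg_right n.cast_nonneg
  have hFTC : ∫ x in a..a + n, f' x = f (a + n) - f a := by
    rw [← Set.uIcc_of_le hle] at hf hf'
    exact intervalIntegral.integral_eq_sub_of_hasDerivAt hf hf'.intervalIntegrable
  have htelescope : ∑ i ∈ range n, f' (a + ↑(i + 1)) - ∑ i ∈ range n, f' (a + i) =
      f' (a + n) - f' a := by
    simpa [← sum_sub_distrib] using sum_range_sub (fun i : ℕ => f' (a + i)) n
  have hlower := hf'.sum_le_integral
  have hupper := hf'.integral_le_sum
  rw [abs_le]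
  constructor <;> linarith

noncomputable def logAntideriv (x : ℝ) : ℝ := x * log x - x

noncomputable def logAntideriv₂ (x : ℝ) : ℝ := x ^ 2 / 2 * log x - 3 / 4 * x ^ 2

theorem hasDerivAt_logAntideriv {x : ℝ} (hx : x ≠ 0) :
    HasDerivAt logAntideriv (log x) x :=
  ((hasDerivAt_mul_log hx).fun_sub (hasDerivAt_id x)).congr_deriv (add_sub_cancel_right _ _)

theorem hasDerivAt_logAntideriv₂ {x : ℝ} (hx : x ≠ 0) :
    HasDerivAt logAntideriv₂ (logAntideriv x) x := by
  refine ((((hasDerivAt_pow 2 x).div_const 2).fun_mul (hasDerivAt_log hx)).fun_sub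
    ((hasDerivAt_pow 2 x).const_mul (3 / 4))).congr_deriv ?_
  simp only [logAntideriv]
  field_simp
  ring

theorem monotoneOn_logAntideriv : MonotoneOn logAntideriv (Set.Ici 1) := by
  have hderiv {x : ℝ} (hx : 1 ≤ x) : HasDerivAt logAntideriv (log x) x :=
    hasDerivAt_logAntideriv (by positivity)
  refine monotoneOn_of_hasDerivWithinAt_nonneg (convex_Ici 1)
    (fun x hx => (hderiv hx).continuousAt.continuousWithinAt)
    (fun x hx => (hderiv (interior_subset hx)).hasDerivWithinAt)
    (fun x hx => log_nonneg (interior_subset hx))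

theorem abs_sum_log_sub_le {a : ℝ} (ha : 0 < a) (n : ℕ) :
    |∑ i ∈ range n, log (a + i) - (logAntideriv (a + n) - logAntideriv a)| ≤
      log (a + n) - log a := by
  refine abs_sum_range_sub_le_of_hasDerivAt_of_monotoneOn
    (fun x hx => hasDerivAt_logAntideriv ?_) (fun x hx y _ hxy => log_le_log ?_ hxy)
  · linarith [hx.1]
  · linarith [hx.1]

theorem abs_sum_logAntideriv_sub_le {a : ℝ} (ha : 1 ≤ a) (n : ℕ) :
    |∑ i ∈ range n, logAntideriv (a + i) - (logAntideriv₂ (a + n) - logAntideriv₂ a)| ≤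
      logAntideriv (a + n) - logAntideriv a :=
  abs_sum_range_sub_le_of_hasDerivAt_of_monotoneOn
    (fun x hx => hasDerivAt_logAntideriv₂ (by linarith [hx.1]))
    (monotoneOn_logAntideriv.mono fun x hx => ha.trans hx.1)

theorem abs_logAntideriv₂_add_one_sub_le {x : ℝ} (hx : 1 ≤ x) :
    |logAntideriv₂ (x + 1) - logAntideriv₂ x| ≤ (x + 1) * log (x + 1) + 2 := by
  have h := abs_sum_logAntideriv_sub_le hx 1
  have hlow : -1 ≤ logAntideriv x := by
    simpa [logAntideriv] using monotoneOn_logAntideriv Set.self_mem_Ici hx hx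
  have hup : logAntideriv (x + 1) ≤ (x + 1) * log (x + 1) := by
    simp only [logAntideriv]; linarith
  simp only [range_one, sum_singleton, Nat.cast_zero, add_zero, Nat.cast_one] at h
  rw [abs_le] at h ⊢
  constructor <;> linarith [h.1, h.2]

theorem logAntideriv₂_two_mul_sub {x : ℝ} (hx : x ≠ 0) :
    logAntideriv₂ (2 * x) - 2 * logAntideriv₂ x = x ^ 2 * log x - x ^ 2 * (3 / 2 - log 4) := by
  have h4 : log 4 = 2 * log 2 := by
    rw [show (4 : ℝ) = 2 ^ 2 by norm_num, log_pow, Nat.cast_ofNat]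
  simp only [logAntideriv₂, log_mul two_ne_zero hx, h4]
  ring

theorem sum_Icc_sum_Icc_log_eq (n : ℕ) :
    ∑ a ∈ Icc 1 n, ∑ b ∈ Icc a (a + n - 1), log b =
      ∑ i ∈ range n, ∑ j ∈ range n, log ((1 + i : ℝ) + j) := by
  have hrow (a : ℕ) (ha : 1 ≤ a) : Icc a (a + n - 1) = Ico a (a + n) := by
    ext b; simp only [mem_Icc, mem_Ico]; omega
  rw [← Ico_add_one_right_eq_Icc, sum_Ico_eq_sum_range]
  refine sum_congr (by simp) fun i _ => ?_
  rw [hrow _ (by omega), sum_Ico_eq_sum_range, add_tsub_cancel_left]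
  push_cast
  rfl

theorem abs_sum_range_sum_range_log_sub_le (n : ℕ) :
    |∑ i ∈ range n, ∑ j ∈ range n, log ((1 + i : ℝ) + j) -
      ∑ i ∈ range n, (logAntideriv ((1 + i : ℝ) + n) - logAntideriv (1 + i))| ≤
      n * log (2 * n + 1) := by
  rw [← sum_sub_distrib]
  calc _ ≤ ∑ i ∈ range n, |∑ j ∈ range n, log ((1 + i : ℝ) + j) -
          (logAntideriv ((1 + i : ℝ) + n) - logAntideriv (1 + i))| := abs_sum_le_sum_abs _ _
    _ ≤ ∑ _i ∈ range n, log (2 * n + 1) := sum_le_sum fun i hi => ?_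
    _ = n * log (2 * n + 1) := by simp
  have hi : (i : ℝ) + 1 ≤ n := by exact_mod_cast mem_range.mp hi
  have hlog_nonneg : 0 ≤ log (1 + i) := log_nonneg (by linarith [i.cast_nonneg (α := ℝ)])
  have hlog_le : log ((1 + i : ℝ) + n) ≤ log (2 * n + 1) := log_le_log (by positivity) (by linarith)
  linarith [abs_sum_log_sub_le (a := 1 + i) (by positivity) n]

theorem abs_sum_range_sum_range_log_sub_logAntideriv₂_le (n : ℕ) :
    |∑ i ∈ range n, ∑ j ∈ range n, log ((1 + i : ℝ) + j) -
      (logAntideriv₂ (1 + n + n) - 2 * logAntideriv₂ (1 + n) + logAntideriv₂ 1)| ≤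
      n * log (2 * n + 1) + (logAntideriv (1 + n + n) - logAntideriv 1) := by
  have hrows := abs_sum_range_sum_range_log_sub_le n
  have hsplit : ∑ i ∈ range n, (logAntideriv ((1 + i : ℝ) + n) - logAntideriv (1 + i)) =
      ∑ i ∈ range n, logAntideriv ((1 + n : ℝ) + i) - ∑ i ∈ range n, logAntideriv (1 + i) := by
    rw [sum_sub_distrib]
    congr 1
    exact sum_congr rfl fun i _ => by ring_nf
  have hupper := abs_sum_logAntideriv_sub_le (a := 1 + n) (by linarith [n.cast_nonneg (α := ℝ)]) n
  have hlower := abs_sum_logAntideriv_sub_le (a := 1) le_rfl n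
  rw [hsplit] at hrows
  rw [abs_le] at *
  constructor <;> linarith [hrows.1, hrows.2, hupper.1, hupper.2, hlower.1, hlower.2]

theorem abs_sum_Icc_sum_Icc_log_sub_le {n : ℕ} (hn : n ≠ 0) :
    |(∑ a ∈ Icc 1 n, ∑ b ∈ Icc a (a + n - 1), log b) -
      ((n : ℝ) ^ 2 * log n - (n : ℝ) ^ 2 * (3 / 2 - log 4))| ≤
      5 * ((2 * n + 1) * log (2 * n + 1) + 2) := by
  have hn1 : (1 : ℝ) ≤ n := by exact_mod_cast Nat.one_le_iff_ne_zero.mpr hn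
  set L := log (2 * n + 1)
  have hL : 0 ≤ L := log_nonneg (by linarith)
  have hnL : n * L ≤ (2 * n + 1) * L := mul_le_mul_of_nonneg_right (by linarith) hL
  have hmain := abs_sum_range_sum_range_log_sub_logAntideriv₂_le n
  have hshift_two := abs_logAntideriv₂_add_one_sub_le (x := 2 * n) (by linarith)
  have hshift_one := abs_logAntideriv₂_add_one_sub_le hn1
  have hsmall : (n + 1) * log (n + 1) ≤ (2 * n + 1) * L :=
    mul_le_mul (by linarith) (log_le_log (by linarith) (by linarith))
      (log_nonneg (by linarith)) (by linarith)
  rw [sum_Icc_sum_Icc_log_eq, ← logAntideriv₂_two_mul_sub (Nat.cast_ne_zero.mpr hn)]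
  rw [show (1 + n + n : ℝ) = 2 * n + 1 by ring, show (1 + n : ℝ) = n + 1 by ring] at hmain
  have hG_one : logAntideriv₂ 1 = -3 / 4 := by norm_num [logAntideriv₂]
  have hg_one : logAntideriv 1 = -1 := by simp [logAntideriv]
  have hg : logAntideriv (2 * n + 1) = (2 * n + 1) * L - (2 * n + 1) := rfl
  rw [hG_one, hg_one, hg] at hmain
  rw [abs_le] at *
  constructor <;> linarith [hmain.1, hmain.2, hshift_one.1, hshift_one.2, hshift_two.1, hshift_two.2]

theorem isLittleO_mul_log_two_mul_add_one :
    (fun n : ℕ => (2 * n + 1 : ℝ) * log (2 * n + 1) + 2) =o[atTop] fun n => (n : ℝ) ^ 2 := by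
  have hmul_log : (fun x : ℝ => x * log x) =o[atTop] fun x => x * x :=
    (isBigO_refl (fun x : ℝ => x) atTop).mul_isLittleO isLittleO_log_id_atTop
  have hlin : Tendsto (fun n : ℕ => (2 * n + 1 : ℝ)) atTop atTop :=
    tendsto_atTop_add_const_right _ _
      (tendsto_natCast_atTop_atTop.const_mul_atTop two_pos)
  have hsq : (fun n : ℕ => (2 * n + 1 : ℝ) * (2 * n + 1)) =O[atTop] fun n => (n : ℝ) ^ 2 := by
    refine IsBigO.of_bound 9 (eventually_atTop.mpr ⟨1, fun n hn => ?_⟩)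
    have hn1 : (1 : ℝ) ≤ n := by exact_mod_cast hn
    rw [norm_of_nonneg (by positivity), norm_of_nonneg (by positivity)]
    nlinarith
  have hconst : (fun _ : ℕ => (2 : ℝ)) =o[atTop] fun n => (n : ℝ) ^ 2 :=
    isLittleO_const_left.mpr <| Or.inr <| tendsto_norm_atTop_atTop.comp <|
      (tendsto_pow_atTop two_ne_zero).comp tendsto_natCast_atTop_atTop
  exact ((hmul_log.comp_tendsto hlin).trans_isBigO hsq).add hconst

/-- Asymptotic for the log of the superfactorial ratio:
`∑_{a=1}^n ∑_{b=a}^{a+n-1} log b = n² log n − n²(3/2 − log 4) + o(n²)`. -/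
theorem log_superfactorial_asymptotic :
    ∀ ε > (0 : ℝ), ∃ N : ℕ, ∀ n ≥ N,
      |(∑ a ∈ Finset.Icc 1 n, ∑ b ∈ Finset.Icc a (a + n - 1), Real.log b) -
        ((n : ℝ) ^ 2 * Real.log n - (n : ℝ) ^ 2 * (3 / 2 - Real.log 4))| ≤ ε * (n : ℝ) ^ 2 := by
  intro ε hε
  obtain ⟨N, hN⟩ :=
    eventually_atTop.mp ((isLittleO_mul_log_two_mul_add_one.const_mul_left 5).def hε)
  refine ⟨max N 1, fun n hn => ?_⟩
  calc _ ≤ 5 * ((2 * n + 1) * log (2 * n + 1) + 2) :=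
        abs_sum_Icc_sum_Icc_log_sub_le (by omega)
    _ ≤ ε * (n : ℝ) ^ 2 := by
        simpa only [norm_eq_abs, abs_pow, Nat.abs_cast] using
          (le_abs_self _).trans (hN n (le_of_max_le_left hn))
end

section
/- Multiplying each permutation in a Latin square (σ₁,...,σₙ) on the left by a fixed transposition τ yields another Latin square, and this operation changes the sign of the Latin square by the factor (-1)^n. Consequently this gives a sign-reversing involution on Latin squares when n is odd. -/
open Finset

namespace IsLatin

theorem mul_left {n : ℕ} {σ : Fin n → Equiv.Perm (Fin n)} (hσ : IsLatin σ)
    (π : Equiv.Perm (Fin n)) : IsLatin (fun m => π * σ m) := by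
  intro i j
  simpa only [Equiv.Perm.mul_apply, ← Equiv.Perm.eq_inv_iff_eq] using hσ i (π⁻¹ j)

end IsLatin

theorem signLS_mul_left {n : ℕ} (π : Equiv.Perm (Fin n)) (σ : Fin n → Equiv.Perm (Fin n)) :
    signLS (fun m => π * σ m) = Equiv.Perm.sign π ^ n * signLS σ := by
  simp only [signLS, map_mul, prod_mul_distrib, prod_const, card_univ, Fintype.card_fin,
    mul_left_comm]

/-- Left-multiplying each permutation of a Latin square by a fixed transposition `τ` yields
another Latin square, and changes its sign by the factor `(-1)^n`. -/
theorem swap_mul_latin (n : ℕ) (τ : Equiv.Perm (Fin n)) (hτ : τ.IsSwap)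
    (σ : Fin n → Equiv.Perm (Fin n)) (hσ : IsLatin σ) :
    IsLatin (fun i => τ * σ i) ∧
      signLS (fun i => τ * σ i) = (-1) ^ n * signLS σ :=
  ⟨hσ.mul_left τ, by rw [signLS_mul_left, hτ.sign_eq]⟩
end
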